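/- Under the same hypotheses (wavelet-type decay $|\phi_k(x)| \le c\,2^{m/2}\xi(2^m(x-t_k))$ with $\xi(x)=(1+|x|)^{-(1+\delta)}$, $0<\delta<1$), for any interval $I = [a,b) \subset [0,1)$ and any $x \in [0,1] \setminus 2I$ (where $2I$ is the interval with the same center as $I$ and twice its length), one has $|\Delta\Phi_m(\mathbf{1}_I)(x)| \le C\, 2^m |I|\, \xi(2^m(x-a))$, with $C$ depending only on $c$ and $\delta$. -/

import Mathlib

/-!
Each term is bounded through the decay estimate:
`|⟨𝟙_I, φ_k⟩ φ_k(x)| ≤ c² 2^m ∫_I ξ(2^m(x - t_k)) ξ(2^m(t - t_k)) dt`.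
The kernel summed over `k` is controlled by `ξ(u) ξ(w) ≤ 2^{1+δ} ξ(u+w) (ξ(u) + ξ(w))` (the larger
of `|u|, |w|` is at least `|u + w| / 2`) together with `∑_k ξ(2^m(y - t_k)) ≤ ∑_{n ∈ ℤ} ξ(n)`, which
holds because the points `2^m t_k` are spaced by `2`. Hence the kernel is `O(ξ(2^m(x - t)))`; for
`t ∈ I` and `x ∉ 2I` one has `|x - a| ≤ 3 |x - t|`, so `ξ(2^m(x - t)) ≤ 3^{1+δ} ξ(2^m(x - a))`, and
integrating over `I` produces the factor `|I|`.
-/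

open MeasureTheory Set

noncomputable section

/-- The decay profile `ξ(x) = (1+|x|)^{-(1+δ)}`. -/
def xi (δ x : ℝ) : ℝ := (1 + |x|) ^ (-(1 + δ))

/-- The center `t_k = (2j-1)/2^m` for `k = 2^{m-1} + j`, `1 ≤ j ≤ 2^{m-1}`. -/
def tpt (m k : ℕ) : ℝ := (2 * ((k : ℝ) - 2 ^ (m - 1)) - 1) / 2 ^ m

/-- Decay bound of a wavelet-type system: for `2^{m-1} < k ≤ 2^m`,
`|φ_k(x)| ≤ c 2^{m/2} ξ(2^m (x - t_k))`. -/
def WaveletDecay (δ c : ℝ) (φ : ℕ → ℝ → ℝ) : Prop :=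
  ∀ m : ℕ, 1 ≤ m → ∀ k ∈ Finset.Ioc (2 ^ (m - 1)) (2 ^ m), ∀ x ∈ Set.Icc (0:ℝ) 1,
    |φ k x| ≤ c * 2 ^ ((m : ℝ) / 2) * xi δ (2 ^ m * (x - tpt m k))

/-- Hölder bound of a wavelet-type system: for `2^{m-1} < k ≤ 2^m` and
`|t - t'| ≤ 2^{-m}`, `|φ_k(t) - φ_k(t')| ≤ c 2^{m/2} (2^m |t-t'|)^α ξ(2^m (t - t_k))`. -/
def WaveletHolder (δ α c : ℝ) (φ : ℕ → ℝ → ℝ) : Prop :=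
  ∀ m : ℕ, 1 ≤ m → ∀ k ∈ Finset.Ioc (2 ^ (m - 1)) (2 ^ m),
    ∀ t ∈ Set.Icc (0:ℝ) 1, ∀ t' ∈ Set.Icc (0:ℝ) 1, |t - t'| ≤ ((2 : ℝ) ^ m)⁻¹ →
      |φ k t - φ k t'| ≤
        c * 2 ^ ((m : ℝ) / 2) * (2 ^ m * |t - t'|) ^ α * xi δ (2 ^ m * (t - tpt m k))

/-- A wavelet-type system: measurable, orthonormal on `(0,1)`, mean zero, with the
decay and Hölder bounds. -/
def IsWaveletSystem (δ α c : ℝ) (φ : ℕ → ℝ → ℝ) : Prop :=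
  (∀ k, Measurable (φ k)) ∧
  (∀ j k : ℕ, 1 ≤ j → 1 ≤ k →
    (∫ x in Set.Ioo (0:ℝ) 1, φ j x * φ k x) = if j = k then 1 else 0) ∧
  (∀ k : ℕ, 1 ≤ k → (∫ x in Set.Ioo (0:ℝ) 1, φ k x) = 0) ∧
  WaveletDecay δ c φ ∧ WaveletHolder δ α c φ

section Xi

variable {δ : ℝ}

lemma xi_pos (δ x : ℝ) : 0 < xi δ x := Real.rpow_pos_of_pos (by positivity) _

lemma xi_neg (δ x : ℝ) : xi δ (-x) = xi δ x := by simp [xi]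

lemma continuous_xi (δ : ℝ) : Continuous (xi δ) :=
  (continuous_const.add continuous_abs).rpow_const fun x =>
    Or.inl (by show 1 + |x| ≠ 0; positivity)

lemma xi_le_xi_of_abs_le (hδ : 0 ≤ 1 + δ) {x y : ℝ} (h : |y| ≤ |x|) : xi δ x ≤ xi δ y :=
  Real.rpow_le_rpow_of_nonpos (by positivity) (by linarith) (by linarith)

lemma xi_le_rpow_mul_xi (hδ : 0 ≤ 1 + δ) {K x y : ℝ} (hK : 0 < K)
    (h : 1 + |x| ≤ K * (1 + |y|)) : xi δ y ≤ K ^ (1 + δ) * xi δ x := by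
  have hy : 0 < 1 + |y| := by positivity
  calc xi δ y = K ^ (1 + δ) * (K * (1 + |y|)) ^ (-(1 + δ)) := by
        rw [Real.mul_rpow hK.le hy.le, ← mul_assoc, ← Real.rpow_add hK, add_neg_cancel,
          Real.rpow_zero, one_mul, xi]
    _ ≤ K ^ (1 + δ) * xi δ x := by
        gcongr
        exact Real.rpow_le_rpow_of_nonpos (by positivity) h (by linarith)

lemma xi_mul_xi_le (hδ : 0 ≤ 1 + δ) (u w : ℝ) :
    xi δ u * xi δ w ≤ 2 ^ (1 + δ) * xi δ (u + w) * (xi δ u + xi δ w) := by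
  have hu := xi_pos δ u
  have hw := xi_pos δ w
  have hscale : 0 ≤ 2 ^ (1 + δ) * xi δ (u + w) := mul_nonneg (by positivity) (xi_pos δ _).le
  rcases le_total |u| |w| with h | h
  · have : xi δ w ≤ 2 ^ (1 + δ) * xi δ (u + w) :=
      xi_le_rpow_mul_xi hδ two_pos (by linarith [abs_add_le u w])
    nlinarith
  · have : xi δ u ≤ 2 ^ (1 + δ) * xi δ (u + w) :=
      xi_le_rpow_mul_xi hδ two_pos (by linarith [abs_add_le u w])
    nlinarith

lemma summable_xi_int (hδ : 0 < δ) : Summable fun n : ℤ => xi δ n := by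
  have hnat : Summable fun n : ℕ => xi δ n := by
    have h := (summable_nat_add_iff 1).2 (Real.summable_nat_rpow.2 (by linarith : -(1 + δ) < -1))
    refine h.congr fun n => ?_
    simp [xi, add_comm]
  exact .of_nat_of_neg (by simpa using hnat) (by simpa [xi] using hnat)

lemma tsum_xi_int_pos (hδ : 0 < δ) : 0 < ∑' n : ℤ, xi δ n :=
  (summable_xi_int hδ).tsum_pos (fun n => (xi_pos δ n).le) 0 (xi_pos δ _)

lemma sum_xi_sub_two_mul_le_tsum (hδ : 0 < δ) (z : ℝ) (F : Finset ℕ) :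
    ∑ k ∈ F, xi δ (z - 2 * k) ≤ ∑' n : ℤ, xi δ n := by
  -- `|z / 2 - n₀| ≤ 1 / 2` and `k - n₀` is an integer, so `|k - n₀| ≤ |z - 2 k|`.
  set n₀ := round (z / 2)
  have hshift : ∀ k : ℕ, xi δ (z - 2 * k) ≤ xi δ (((k : ℤ) - n₀ : ℤ) : ℝ) := by
    intro k
    refine xi_le_xi_of_abs_le (by linarith) ?_
    set d : ℤ := k - n₀
    rcases eq_or_ne d 0 with hd | hd
    · simp [hd]
    have hd1 : (1 : ℝ) ≤ |(d : ℝ)| := by exact_mod_cast Int.one_le_abs hd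
    have hz : z - 2 * k = 2 * (z / 2 - n₀) - 2 * d := by push_cast [d]; ring
    have hr := abs_sub_round (z / 2)
    rw [hz]
    have := abs_sub_abs_le_abs_sub (2 * (d : ℝ)) (2 * (z / 2 - n₀))
    rw [abs_sub_comm (2 * (d : ℝ)), abs_mul, abs_mul, abs_two] at this
    linarith
  have hinj : Set.InjOn (fun k : ℕ => (k : ℤ) - n₀) F := fun k _ l _ h => by simpa using h
  calc ∑ k ∈ F, xi δ (z - 2 * k) ≤ ∑ k ∈ F, xi δ (((k : ℤ) - n₀ : ℤ) : ℝ) :=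
        Finset.sum_le_sum fun k _ => hshift k
    _ = ∑ n ∈ F.image fun k : ℕ => (k : ℤ) - n₀, xi δ n :=
        (Finset.sum_image (f := fun n : ℤ => xi δ n) hinj).symm
    _ ≤ ∑' n : ℤ, xi δ n := (summable_xi_int hδ).sum_le_tsum _ fun n _ => (xi_pos δ n).le

end Xi

lemma two_pow_mul_sub_tpt (m k : ℕ) (y : ℝ) :
    2 ^ m * (y - tpt m k) = (2 ^ m * y + 2 * 2 ^ (m - 1) + 1) - 2 * k := by
  unfold tpt
  field_simp
  ring

section Kernel

variable {δ : ℝ}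

lemma sum_xi_two_pow_mul_sub_tpt_le (hδ : 0 < δ) (m : ℕ) (y : ℝ) (F : Finset ℕ) :
    ∑ k ∈ F, xi δ (2 ^ m * (y - tpt m k)) ≤ ∑' n : ℤ, xi δ n := by
  simpa only [two_pow_mul_sub_tpt] using sum_xi_sub_two_mul_le_tsum hδ _ F

lemma sum_xi_mul_xi_le (hδ : 0 < δ) (m : ℕ) (F : Finset ℕ) (x t : ℝ) :
    ∑ k ∈ F, xi δ (2 ^ m * (x - tpt m k)) * xi δ (2 ^ m * (t - tpt m k)) ≤
      2 * 2 ^ (1 + δ) * (∑' n : ℤ, xi δ n) * xi δ (2 ^ m * (x - t)) := by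
  have hterm : ∀ k : ℕ, xi δ (2 ^ m * (x - tpt m k)) * xi δ (2 ^ m * (t - tpt m k)) ≤
      2 ^ (1 + δ) * xi δ (2 ^ m * (x - t)) *
        (xi δ (2 ^ m * (x - tpt m k)) + xi δ (2 ^ m * (t - tpt m k))) := by
    intro k
    have h := xi_mul_xi_le (by linarith) (2 ^ m * (x - tpt m k)) (-(2 ^ m * (t - tpt m k)))
    rwa [xi_neg, ← mul_neg, ← mul_add, show x - tpt m k + -(t - tpt m k) = x - t by ring] at h
  calc _ ≤ ∑ k ∈ F, 2 ^ (1 + δ) * xi δ (2 ^ m * (x - t)) *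
        (xi δ (2 ^ m * (x - tpt m k)) + xi δ (2 ^ m * (t - tpt m k))) :=
        Finset.sum_le_sum fun k _ => hterm k
    _ = 2 ^ (1 + δ) * xi δ (2 ^ m * (x - t)) *
        (∑ k ∈ F, xi δ (2 ^ m * (x - tpt m k)) + ∑ k ∈ F, xi δ (2 ^ m * (t - tpt m k))) := by
        rw [← Finset.mul_sum, Finset.sum_add_distrib]
    _ ≤ 2 ^ (1 + δ) * xi δ (2 ^ m * (x - t)) *
        ((∑' n : ℤ, xi δ n) + ∑' n : ℤ, xi δ n) := by
        have := mul_nonneg (by positivity : (0 : ℝ) ≤ 2 ^ (1 + δ)) (xi_pos δ (2 ^ m * (x - t))).le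
        gcongr <;> exact sum_xi_two_pow_mul_sub_tpt_le hδ m _ F
    _ = _ := by ring

lemma xi_mul_sub_le_of_far (hδ : 0 ≤ 1 + δ) {s a b x t : ℝ} (hs : 0 ≤ s) (ht : t ∈ Icc a b)
    (hx : b - a < |x - (a + b) / 2|) : xi δ (s * (x - t)) ≤ 3 ^ (1 + δ) * xi δ (s * (x - a)) := by
  have hmid : |t - (a + b) / 2| ≤ (b - a) / 2 := abs_le.2 ⟨by linarith [ht.1], by linarith [ht.2]⟩
  have hxt : |x - a| ≤ 3 * |x - t| := by
    have h1 := abs_sub_le x t ((a + b) / 2)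
    have h2 := abs_sub_le x t a
    rw [abs_of_nonneg (sub_nonneg.2 ht.1)] at h2
    linarith [ht.2]
  refine xi_le_rpow_mul_xi hδ (by norm_num) ?_
  rw [abs_mul, abs_mul, abs_of_nonneg hs]
  nlinarith [abs_nonneg (x - t)]

end Kernel

section Wavelet

variable {δ c : ℝ} {φ : ℕ → ℝ → ℝ} {m k : ℕ} {a b : ℝ}

lemma integrableOn_xi_two_pow_mul_sub (δ : ℝ) (m : ℕ) (y a b : ℝ) :
    IntegrableOn (fun t => xi δ (2 ^ m * (t - y))) (Ioo a b) :=
  ((continuous_xi δ).comp (by fun_prop)).integrableOn_Icc.mono_set Ioo_subset_Icc_self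

lemma abs_setIntegral_le_of_waveletDecay (hφ : WaveletDecay δ c φ) (hm : 1 ≤ m)
    (hk : k ∈ Finset.Ioc (2 ^ (m - 1)) (2 ^ m)) (ha : 0 ≤ a) (hb : b ≤ 1) :
    |∫ t in Ioo a b, φ k t| ≤
      c * 2 ^ ((m : ℝ) / 2) * ∫ t in Ioo a b, xi δ (2 ^ m * (t - tpt m k)) := by
  rw [← integral_const_mul, ← Real.norm_eq_abs]
  refine norm_integral_le_of_norm_le
    ((integrableOn_xi_two_pow_mul_sub δ m _ a b).const_mul _) ?_
  filter_upwards [ae_restrict_mem measurableSet_Ioo] with t ht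
  exact hφ m hm k hk t ⟨by linarith [ht.1], by linarith [ht.2]⟩

lemma abs_setIntegral_mul_le_of_waveletDecay (hφ : WaveletDecay δ c φ) (hm : 1 ≤ m)
    (hk : k ∈ Finset.Ioc (2 ^ (m - 1)) (2 ^ m)) (ha : 0 ≤ a) (hb : b ≤ 1) {x : ℝ}
    (hx : x ∈ Icc (0 : ℝ) 1) :
    |(∫ t in Ioo a b, φ k t) * φ k x| ≤
      c ^ 2 * 2 ^ m *
        ∫ t in Ioo a b, xi δ (2 ^ m * (x - tpt m k)) * xi δ (2 ^ m * (t - tpt m k)) := by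
  have hsqrt : (2 : ℝ) ^ ((m : ℝ) / 2) * 2 ^ ((m : ℝ) / 2) = 2 ^ m := by
    rw [← Real.rpow_add two_pos, add_halves, Real.rpow_natCast]
  have hI := abs_setIntegral_le_of_waveletDecay hφ hm hk ha hb
  have hx := hφ m hm k hk x hx
  rw [abs_mul, integral_const_mul]
  calc _ ≤ (c * 2 ^ ((m : ℝ) / 2) * ∫ t in Ioo a b, xi δ (2 ^ m * (t - tpt m k))) *
        (c * 2 ^ ((m : ℝ) / 2) * xi δ (2 ^ m * (x - tpt m k))) :=
        mul_le_mul hI hx (abs_nonneg _) ((abs_nonneg _).trans hI)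
    _ = _ := by rw [← hsqrt]; ring

end Wavelet

lemma setIntegral_sum_xi_mul_xi_le {δ : ℝ} (hδ : 0 < δ) (m : ℕ) (F : Finset ℕ) {a b x : ℝ}
    (hab : a ≤ b) (hx : b - a < |x - (a + b) / 2|) :
    ∫ t in Ioo a b, ∑ k ∈ F, xi δ (2 ^ m * (x - tpt m k)) * xi δ (2 ^ m * (t - tpt m k)) ≤
      (b - a) * (2 * 2 ^ (1 + δ) * (∑' n : ℤ, xi δ n) * 3 ^ (1 + δ)) *
        xi δ (2 ^ m * (x - a)) := by
  have hS := tsum_xi_int_pos hδ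
  have hbound : ∀ t ∈ Ioo a b,
      ∑ k ∈ F, xi δ (2 ^ m * (x - tpt m k)) * xi δ (2 ^ m * (t - tpt m k)) ≤
        2 * 2 ^ (1 + δ) * (∑' n : ℤ, xi δ n) * 3 ^ (1 + δ) * xi δ (2 ^ m * (x - a)) := by
    intro t ht
    calc _ ≤ 2 * 2 ^ (1 + δ) * (∑' n : ℤ, xi δ n) * xi δ (2 ^ m * (x - t)) :=
          sum_xi_mul_xi_le hδ m F x t
      _ ≤ 2 * 2 ^ (1 + δ) * (∑' n : ℤ, xi δ n) * (3 ^ (1 + δ) * xi δ (2 ^ m * (x - a))) := by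
          gcongr
          exact xi_mul_sub_le_of_far (by linarith) (by positivity) (Ioo_subset_Icc_self ht) hx
      _ = _ := by ring
  calc _ ≤ ∫ _ in Ioo a b,
        2 * 2 ^ (1 + δ) * (∑' n : ℤ, xi δ n) * 3 ^ (1 + δ) * xi δ (2 ^ m * (x - a)) :=
        setIntegral_mono_on (integrable_finsetSum F fun k _ =>
          (integrableOn_xi_two_pow_mul_sub δ m _ a b).const_mul _)
          (integrableOn_const (by simp)) measurableSet_Ioo hbound
    _ = _ := by
        rw [setIntegral_const, measureReal_def, Real.volume_Ioo,
          ENNReal.toReal_ofReal (sub_nonneg.2 hab), smul_eq_mul]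
        ring

theorem stmt7_general (δ c : ℝ) (hδ0 : 0 < δ) (hc : 0 < c) :
    ∃ C : ℝ, 0 < C ∧
      ∀ α : ℝ, 0 < α → α ≤ 1 →
        ∀ φ : ℕ → ℝ → ℝ, IsWaveletSystem δ α c φ →
          ∀ m : ℕ, 1 ≤ m → ∀ a b : ℝ, 0 ≤ a → a < b → b ≤ 1 →
            ∀ x ∈ Set.Icc (0:ℝ) 1, b - a < |x - (a + b) / 2| →
              |∑ k ∈ Finset.Ioc (2 ^ (m - 1)) (2 ^ m),
                  (∫ t in Set.Ioo a b, φ k t) * φ k x| ≤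
                C * 2 ^ m * (b - a) * xi δ (2 ^ m * (x - a)) := by
  have hS := tsum_xi_int_pos hδ0
  refine ⟨c ^ 2 * (2 * 2 ^ (1 + δ) * (∑' n : ℤ, xi δ n) * 3 ^ (1 + δ)), by positivity, ?_⟩
  intro α _ _ φ hφ m hm a b ha hab hb x hx hfar
  set F := Finset.Ioc (2 ^ (m - 1)) (2 ^ m)
  calc _ ≤ ∑ k ∈ F, |(∫ t in Ioo a b, φ k t) * φ k x| := Finset.abs_sum_le_sum_abs _ _
    _ ≤ ∑ k ∈ F, c ^ 2 * 2 ^ m *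
          ∫ t in Ioo a b, xi δ (2 ^ m * (x - tpt m k)) * xi δ (2 ^ m * (t - tpt m k)) :=
        Finset.sum_le_sum fun k hk =>
          abs_setIntegral_mul_le_of_waveletDecay hφ.2.2.2.1 hm hk ha hb hx
    _ = c ^ 2 * 2 ^ m *
          ∫ t in Ioo a b, ∑ k ∈ F, xi δ (2 ^ m * (x - tpt m k)) * xi δ (2 ^ m * (t - tpt m k)) := by
        rw [← Finset.mul_sum, integral_finsetSum F fun k _ =>
          (integrableOn_xi_two_pow_mul_sub δ m _ a b).const_mul _]
    _ ≤ c ^ 2 * 2 ^ m * ((b - a) * (2 * 2 ^ (1 + δ) * (∑' n : ℤ, xi δ n) * 3 ^ (1 + δ)) *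
          xi δ (2 ^ m * (x - a))) := by
        gcongr
        exact setIntegral_sum_xi_mul_xi_le hδ0 m F hab.le hfar
    _ = _ := by ring

/-- Away from the doubled interval `2I`, a wavelet block applied to `𝟙_I` decays like
`2^m |I| ξ(2^m (x - a))`. -/
theorem stmt7 (δ c : ℝ) (hδ0 : 0 < δ) (hδ1 : δ < 1) (hc : 0 < c) :
    ∃ C : ℝ, 0 < C ∧
      ∀ α : ℝ, 0 < α → α ≤ 1 →
        ∀ φ : ℕ → ℝ → ℝ, IsWaveletSystem δ α c φ →
          ∀ m : ℕ, 1 ≤ m → ∀ a b : ℝ, 0 ≤ a → a < b → b ≤ 1 →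
            ∀ x ∈ Set.Icc (0:ℝ) 1, b - a < |x - (a + b) / 2| →
              |∑ k ∈ Finset.Ioc (2 ^ (m - 1)) (2 ^ m),
                  (∫ t in Set.Ioo a b, φ k t) * φ k x| ≤
                C * 2 ^ m * (b - a) * xi δ (2 ^ m * (x - a)) :=
  stmt7_general δ c hδ0 hc
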